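/- Let T > 0 and let α : [0,T] → ℝ be continuously differentiable with α′(t) ≤ 0 for all t ∈ [0,T] and 0 < α_* ≤ α(t) ≤ α* < 1. Then there exist constants C > 0 and τ₀ ∈ (0,1], depending only on α and T, such that for every positive integer N with τ = T/N ≤ τ₀, every n with 2 ≤ n ≤ N, and every k with 1 ≤ k ≤ n−1, one has b_{n−k}^{(n)} ≤ (1 + Cτ) b_{n−k}^{(n−1)}. -/
import Mathlib


/-- The kernel `ω_{1-β}(t) = t^{-β} / Γ(1-β)`. -/
noncomputable def omegaK (β t : ℝ) : ℝ := t ^ (-β) / Real.Gamma (1 - β)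

/-- The L1⁺ coefficient `a_j^{(n)}(α)` on the uniform mesh `t_k = k τ`:
`a_{n-k+1}^{(n)}(α) = (1/τ²) ∫_{t_{n-1}}^{t_n} ∫_{t_{k-1}}^{min(t, t_k)} ω_{1-α}(t-s) ds dt`,
expressed with `j = n - k + 1`, i.e. `k = n - j + 1`. -/
noncomputable def acoef (τ α : ℝ) (n j : ℕ) : ℝ :=
  (1 / τ ^ 2) * ∫ t in (((n : ℝ) - 1) * τ)..((n : ℝ) * τ),
      ∫ s in (((n : ℝ) - (j : ℝ)) * τ)..(min t (((n : ℝ) - (j : ℝ) + 1) * τ)),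
        omegaK α (t - s)

/-- Variable-order coefficients: at time level `n` the order is `α̃_n = α((n - 1/2) τ)`, and
`b_1^{(n)} = 1 + τ a_1^{(n)}`, `b_j^{(n)} = τ a_j^{(n)}` for `j ≥ 2`. -/
noncomputable def bvar (α : ℝ → ℝ) (τ : ℝ) (n j : ℕ) : ℝ :=
  if j = 1 then 1 + τ * acoef τ (α (((n : ℝ) - 1 / 2) * τ)) n 1
  else τ * acoef τ (α (((n : ℝ) - 1 / 2) * τ)) n j


open Real MeasureTheory intervalIntegral

lemma omegaK_nonneg {β : ℝ} (hβ : β < 1) {x : ℝ} (hx : 0 ≤ x) : 0 ≤ omegaK β x :=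
  div_nonneg (Real.rpow_nonneg hx _) (Real.Gamma_pos_of_pos (by linarith)).le

lemma omegaK_intervalIntegrable {β : ℝ} (hβ : β < 1) (t a b : ℝ) :
    IntervalIntegrable (fun s => omegaK β (t - s)) volume a b := by
  have h := (intervalIntegrable_rpow' (a := t - a) (b := t - b)
    (show (-1 : ℝ) < -β by linarith)).comp_sub_left t
  simp only [sub_sub_cancel] at h
  exact h.div_const _

lemma inner_eq {β : ℝ} (hβ : β < 1) (t a c : ℝ) :
    (∫ s in a..c, omegaK β (t - s))
      = ((t - a) ^ (1 - β) - (t - c) ^ (1 - β)) / ((1 - β) * Real.Gamma (1 - β)) := by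
  simp only [omegaK]
  rw [intervalIntegral.integral_div]
  rw [intervalIntegral.integral_comp_sub_left (fun x : ℝ => x ^ (-β)) t]
  rw [integral_rpow (Or.inl (by linarith))]
  rw [div_div]
  ring_nf

lemma acoef_succ (τ β : ℝ) (m j : ℕ) : acoef τ β (m + 1) j = acoef τ β m j := by
  unfold acoef
  push_cast
  congr 1
  have key : ∀ t : ℝ,
      (∫ s in (((m : ℝ) + 1 - j) * τ)..(min t (((m : ℝ) + 1 - j + 1) * τ)), omegaK β (t - s))
        = ∫ s in (((m : ℝ) - j) * τ)..(min (t - τ) (((m : ℝ) - j + 1) * τ)),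
            omegaK β (t - τ - s) := by
    intro t
    have h := intervalIntegral.integral_comp_add_right
      (a := ((m : ℝ) - j) * τ) (b := min (t - τ) (((m : ℝ) - j + 1) * τ))
      (fun s => omegaK β (t - s)) τ
    have e1 : ((m : ℝ) - j) * τ + τ = ((m : ℝ) + 1 - j) * τ := by ring
    have e2 : min (t - τ) (((m : ℝ) - j + 1) * τ) + τ
        = min t (((m : ℝ) + 1 - j + 1) * τ) := by
      rw [← min_add_add_right]; congr 1 <;> ring
    rw [e1, e2] at h
    rw [← h]
    congr 1
    funext s
    congr 1
    ring
  calc (∫ t in (((m : ℝ) + 1 - 1) * τ)..(((m : ℝ) + 1) * τ),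
          ∫ s in (((m : ℝ) + 1 - j) * τ)..(min t (((m : ℝ) + 1 - j + 1) * τ)), omegaK β (t - s))
      = ∫ t in (((m : ℝ) + 1 - 1) * τ)..(((m : ℝ) + 1) * τ),
          (fun u => ∫ s in (((m : ℝ) - j) * τ)..(min u (((m : ℝ) - j + 1) * τ)),
            omegaK β (u - s)) (t - τ) := by
        apply intervalIntegral.integral_congr
        intro t _
        exact key t
    _ = ∫ t in (((m : ℝ) + 1 - 1) * τ - τ)..(((m : ℝ) + 1) * τ - τ),
          ∫ s in (((m : ℝ) - j) * τ)..(min t (((m : ℝ) - j + 1) * τ)), omegaK β (t - s) := by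
        exact intervalIntegral.integral_comp_sub_right
          (fun u => ∫ s in (((m : ℝ) - j) * τ)..(min u (((m : ℝ) - j + 1) * τ)),
            omegaK β (u - s)) τ
    _ = ∫ t in (((m : ℝ) - 1) * τ)..((m : ℝ) * τ),
          ∫ s in (((m : ℝ) - j) * τ)..(min t (((m : ℝ) - j + 1) * τ)), omegaK β (t - s) := by
        congr 1 <;> ring

lemma acoef_nonneg {τ β : ℝ} (hτ : 0 < τ) (hβ : β < 1) (n j : ℕ) (hj : 1 ≤ j) :
    0 ≤ acoef τ β n j := by
  unfold acoef
  apply mul_nonneg (by positivity)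
  apply intervalIntegral.integral_nonneg (by nlinarith : ((n : ℝ) - 1) * τ ≤ (n : ℝ) * τ)
  intro t ht
  have hjr : (1 : ℝ) ≤ (j : ℝ) := by exact_mod_cast hj
  have ha : ((n : ℝ) - j) * τ ≤ min t (((n : ℝ) - j + 1) * τ) := by
    apply le_min
    · nlinarith [ht.1]
    · nlinarith
  apply intervalIntegral.integral_nonneg ha
  intro s hs
  exact omegaK_nonneg hβ (by linarith [hs.2, min_le_left t (((n : ℝ) - j + 1) * τ)])

lemma acoef_compare {T τ β₁ β₂ E : ℝ} {n j : ℕ}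
    (hτ : 0 < τ) (hb1 : β₁ < 1) (hb2 : β₂ < 1) (hE : 0 ≤ E)
    (hj : 1 ≤ j) (hjn : j ≤ n) (hnT : (n : ℝ) * τ ≤ T)
    (hpt : ∀ x : ℝ, 0 ≤ x → x ≤ T → omegaK β₁ x ≤ E * omegaK β₂ x) :
    acoef τ β₁ n j ≤ E * acoef τ β₂ n j := by
  have hjr : (1 : ℝ) ≤ (j : ℝ) := by exact_mod_cast hj
  have hjnr : (j : ℝ) ≤ (n : ℝ) := by exact_mod_cast hjn
  set A := ((n : ℝ) - 1) * τ with hA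
  set B := (n : ℝ) * τ with hB
  set a := ((n : ℝ) - j) * τ with ha
  set b := ((n : ℝ) - j + 1) * τ with hb
  have hAB : A ≤ B := by nlinarith
  have haA : a ≤ A := by nlinarith
  have ha0 : 0 ≤ a := by nlinarith
  have hBT : B ≤ T := hnT
  -- integrability of the inner integrals as functions of t
  have hFint : ∀ β : ℝ, β < 1 →
      IntervalIntegrable (fun t => ∫ s in a..(min t b), omegaK β (t - s)) volume A B := by
    intro β hβ
    have heq : (fun t => ∫ s in a..(min t b), omegaK β (t - s))
        = fun t => ((t - a) ^ (1 - β) - (t - min t b) ^ (1 - β))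
            / ((1 - β) * Real.Gamma (1 - β)) := by
      funext t; exact inner_eq hβ t a (min t b)
    rw [heq]
    apply Continuous.intervalIntegrable
    have h1 : Continuous fun t : ℝ => (t - a) ^ (1 - β) :=
      (Real.continuous_rpow_const (by linarith)).comp (continuous_id.sub continuous_const)
    have h2 : Continuous fun t : ℝ => (t - min t b) ^ (1 - β) :=
      (Real.continuous_rpow_const (by linarith)).comp
        (continuous_id.sub (continuous_id.min continuous_const))
    exact (h1.sub h2).div_const _
  have hptF : ∀ t ∈ Set.Icc A B,
      (∫ s in a..(min t b), omegaK β₁ (t - s))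
        ≤ E * ∫ s in a..(min t b), omegaK β₂ (t - s) := by
    intro t ht
    have hamin : a ≤ min t b := le_min (haA.trans ht.1) (by nlinarith)
    rw [← intervalIntegral.integral_const_mul]
    apply intervalIntegral.integral_mono_on hamin
      (omegaK_intervalIntegrable hb1 t a (min t b))
      ((omegaK_intervalIntegrable hb2 t a (min t b)).const_mul E)
    intro s hs
    have hsle : s ≤ t := le_trans hs.2 (min_le_left t b)
    have hxT : t - s ≤ T := by
      have := hs.1; have := ht.2; simp only [hA, hB, ha] at *; linarith
    exact hpt (t - s) (by linarith) hxT
  have hmain : (∫ t in A..B, ∫ s in a..(min t b), omegaK β₁ (t - s))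
      ≤ E * ∫ t in A..B, ∫ s in a..(min t b), omegaK β₂ (t - s) := by
    rw [← intervalIntegral.integral_const_mul]
    exact intervalIntegral.integral_mono_on hAB (hFint β₁ hb1)
      ((hFint β₂ hb2).const_mul E) hptF
  unfold acoef
  have h2 : (0:ℝ) ≤ 1 / τ ^ 2 := by positivity
  calc (1 / τ ^ 2) * ∫ t in A..B, ∫ s in a..(min t b), omegaK β₁ (t - s)
      ≤ (1 / τ ^ 2) * (E * ∫ t in A..B, ∫ s in a..(min t b), omegaK β₂ (t - s)) :=
        mul_le_mul_of_nonneg_left hmain h2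
    _ = E * ((1 / τ ^ 2) * ∫ t in A..B, ∫ s in a..(min t b), omegaK β₂ (t - s)) := by ring

lemma kernel_bound {T αs αb : ℝ} (hT : 0 < T) (hαs : 0 < αs) (hαb : αb < 1) :
    ∃ K : ℝ, 0 ≤ K ∧ ∀ β₁ β₂ x : ℝ, αs ≤ β₁ → β₁ ≤ β₂ → β₂ ≤ αb → 0 ≤ x → x ≤ T →
      omegaK β₁ x ≤ Real.exp (K * (β₂ - β₁)) * omegaK β₂ x := by
  set f : ℝ → ℝ := Real.log ∘ Real.Gamma with hf
  set u : ℝ := (1 - αb) / 2 with hu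
  set v : ℝ := (1 - αb) * 3 / 4 with hv
  set K₀ : ℝ := max 0 ((f u - f v) / (v - u)) with hK₀
  set M : ℝ := max 1 T with hM
  refine ⟨Real.log M + K₀, ?_, ?_⟩
  · have : (1:ℝ) ≤ M := le_max_left 1 T
    have := Real.log_nonneg this
    have := le_max_left (0:ℝ) ((f u - f v) / (v - u))
    simp only [hK₀]; linarith
  intro β₁ β₂ x h1 h12 h2 hx0 hxT
  have hβ₁0 : 0 < β₁ := lt_of_lt_of_le hαs h1
  have hβ₂0 : 0 < β₂ := lt_of_lt_of_le hβ₁0 h12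
  have hβ₂1 : β₂ < 1 := lt_of_le_of_lt h2 hαb
  have hβ₁1 : β₁ < 1 := lt_of_le_of_lt h12 hβ₂1
  have hΓ1 : 0 < Real.Gamma (1 - β₁) := Real.Gamma_pos_of_pos (by linarith)
  have hΓ2 : 0 < Real.Gamma (1 - β₂) := Real.Gamma_pos_of_pos (by linarith)
  set δ := β₂ - β₁ with hδ
  have hδ0 : 0 ≤ δ := by simp only [hδ]; linarith
  rcases eq_or_lt_of_le hx0 with hx | hx
  · -- x = 0
    rw [omegaK, omegaK, ← hx]
    rw [Real.zero_rpow (by linarith : -β₁ ≠ 0), Real.zero_rpow (by linarith : -β₂ ≠ 0)]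
    simp
  -- Step B : Gamma ratio
  have hB : Real.Gamma (1 - β₂) ≤ Real.exp (K₀ * δ) * Real.Gamma (1 - β₁) := by
    rcases eq_or_lt_of_le h12 with he | hlt
    · rw [he]; simp only [hδ, he, sub_self, mul_zero, Real.exp_zero, one_mul]; exact le_rfl
    · set y₂ := 1 - β₂ with hy2
      set y₁ := 1 - β₁ with hy1
      have huv : u < v := by simp only [hu, hv]; linarith
      have hvy2 : v < y₂ := by simp only [hv, hy2]; nlinarith
      have hy21 : y₂ < y₁ := by simp only [hy2, hy1]; linarith
      have hu0 : (0:ℝ) < u := by simp only [hu]; linarith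
      have hc := Real.convexOn_log_Gamma
      have s1 : (f v - f u) / (v - u) ≤ (f y₂ - f v) / (y₂ - v) :=
        hc.slope_mono_adjacent (Set.mem_Ioi.2 hu0) (Set.mem_Ioi.2 (by linarith)) huv hvy2
      have s2 : (f y₂ - f v) / (y₂ - v) ≤ (f y₁ - f y₂) / (y₁ - y₂) :=
        hc.slope_mono_adjacent (Set.mem_Ioi.2 (by linarith)) (Set.mem_Ioi.2 (by linarith))
          hvy2 hy21
      have hs : (f v - f u) / (v - u) ≤ (f y₁ - f y₂) / (y₁ - y₂) := s1.trans s2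
      have hfineq : f y₂ - f y₁ ≤ K₀ * δ := by
        have h21 : y₁ - y₂ = δ := by simp only [hy1, hy2, hδ]; ring
        have hK₀ge : (f u - f v) / (v - u) ≤ K₀ := le_max_right _ _
        have hpos : 0 < y₁ - y₂ := by linarith
        have hvu : (0:ℝ) < v - u := by linarith
        have hK₀' : f u - f v ≤ K₀ * (v - u) := (div_le_iff₀ hvu).1 hK₀ge
        rw [div_le_div_iff₀ hvu hpos, h21] at hs
        have h3 : (f y₂ - f y₁) * (v - u) ≤ (f u - f v) * δ := by linarith
        have h4 : (f u - f v) * δ ≤ K₀ * (v - u) * δ :=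
          mul_le_mul_of_nonneg_right hK₀' hδ0
        have h5 : (f y₂ - f y₁) * (v - u) ≤ (K₀ * δ) * (v - u) := by nlinarith
        exact le_of_mul_le_mul_right h5 hvu
      have he2 : Real.Gamma y₂ = Real.exp (f y₂) :=
        (Real.exp_log (Real.Gamma_pos_of_pos (by linarith))).symm
      have he1 : Real.Gamma y₁ = Real.exp (f y₁) :=
        (Real.exp_log (Real.Gamma_pos_of_pos (by linarith))).symm
      rw [he1, he2, ← Real.exp_add]
      exact Real.exp_le_exp.2 (by linarith)
  -- Step A : rpow ratio
  have hA : x ^ (-β₁) ≤ M ^ δ * x ^ (-β₂) := by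
    have : x ^ (-β₁) = x ^ δ * x ^ (-β₂) := by
      rw [← Real.rpow_add hx]; congr 1; simp only [hδ]; ring
    rw [this]
    apply mul_le_mul_of_nonneg_right _ (Real.rpow_nonneg hx0 _)
    exact Real.rpow_le_rpow hx0 (le_trans hxT (le_max_right 1 T)) hδ0
  have hMδ : M ^ δ = Real.exp (Real.log M * δ) := by
    rw [Real.rpow_def_of_pos (lt_of_lt_of_le one_pos (le_max_left 1 T))]
  have hEsplit : Real.exp ((Real.log M + K₀) * δ) = M ^ δ * Real.exp (K₀ * δ) := by
    rw [hMδ, ← Real.exp_add]; congr 1; ring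
  rw [omegaK, omegaK, hEsplit]
  rw [div_le_iff₀ hΓ1] at *
  have hMδ0 : 0 ≤ M ^ δ := Real.rpow_nonneg (by positivity) _
  have hrp2 : 0 ≤ x ^ (-β₂) := Real.rpow_nonneg hx0 _
  calc x ^ (-β₁) ≤ M ^ δ * x ^ (-β₂) := hA
    _ ≤ M ^ δ * x ^ (-β₂) * (Real.exp (K₀ * δ) * Real.Gamma (1 - β₁)) / Real.Gamma (1 - β₂) := by
        rw [le_div_iff₀ hΓ2]
        nlinarith [mul_le_mul_of_nonneg_left hB (mul_nonneg hMδ0 hrp2)]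
    _ = M ^ δ * Real.exp (K₀ * δ) * (x ^ (-β₂) / Real.Gamma (1 - β₂)) * Real.Gamma (1 - β₁) := by
        ring

lemma exp_small {y τ : ℝ} (hy : 0 ≤ y) (hτ0 : 0 ≤ τ) (hτ1 : τ ≤ 1) :
    Real.exp (y * τ) ≤ 1 + (y * Real.exp y) * τ := by
  have h1 := Real.add_one_le_exp (-(y * τ))
  have h2 : Real.exp (y * τ) ≤ Real.exp y := Real.exp_le_exp.2 (by nlinarith)
  have h3 : Real.exp (-(y * τ)) * Real.exp (y * τ) = 1 := by
    rw [← Real.exp_add]; simp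
  nlinarith [Real.exp_pos (y * τ), mul_le_mul_of_nonneg_right h1 (Real.exp_pos (y * τ)).le,
    mul_le_mul_of_nonneg_right h2 (mul_nonneg hy hτ0)]

set_option maxHeartbeats 1600000 in
theorem stmt3 (T : ℝ) (hT : 0 < T) (α α' : ℝ → ℝ)
    (hderiv : ∀ t ∈ Set.Icc (0 : ℝ) T, HasDerivWithinAt α (α' t) (Set.Icc 0 T) t)
    (hcont : ContinuousOn α' (Set.Icc (0 : ℝ) T))
    (hneg : ∀ t ∈ Set.Icc (0 : ℝ) T, α' t ≤ 0)
    (αs αb : ℝ) (hαs : 0 < αs) (hαb : αb < 1)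
    (hbound : ∀ t ∈ Set.Icc (0 : ℝ) T, αs ≤ α t ∧ α t ≤ αb) :
    ∃ C > 0, ∃ τ₀ ∈ Set.Ioc (0 : ℝ) 1,
      ∀ N : ℕ, 0 < N → T / N ≤ τ₀ →
        ∀ n : ℕ, 2 ≤ n → n ≤ N →
          ∀ k : ℕ, 1 ≤ k → k ≤ n - 1 →
            bvar α (T / N) n (n - k) ≤ (1 + C * (T / N)) * bvar α (T / N) (n - 1) (n - k) := by
  -- bound on the derivative
  obtain ⟨L₀, hL₀⟩ := (isCompact_Icc : IsCompact (Set.Icc (0 : ℝ) T)).exists_bound_of_continuousOn hcont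
  set L : ℝ := max L₀ 0 with hLdef
  have hL0 : 0 ≤ L := le_max_right _ _
  have hLb : ∀ t ∈ Set.Icc (0 : ℝ) T, ‖α' t‖ ≤ L := fun t ht => (hL₀ t ht).trans (le_max_left _ _)
  have hLip : ∀ x ∈ Set.Icc (0 : ℝ) T, ∀ y ∈ Set.Icc (0 : ℝ) T, ‖α y - α x‖ ≤ L * ‖y - x‖ :=
    fun x hx y hy =>
      Convex.norm_image_sub_le_of_norm_hasDerivWithin_le hderiv hLb (convex_Icc 0 T) hx hy
  have hAnti : AntitoneOn α (Set.Icc (0 : ℝ) T) :=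
    antitoneOn_of_hasDerivWithinAt_nonpos (convex_Icc 0 T)
      (fun x hx => (hderiv x hx).continuousWithinAt)
      (fun x hx => (hderiv x (interior_subset hx)).mono interior_subset)
      (fun x hx => hneg x (interior_subset hx))
  obtain ⟨K, hK0, hKmain⟩ := kernel_bound hT hαs hαb
  refine ⟨K * L * Real.exp (K * L) + 1, by positivity, 1, ⟨one_pos, le_refl 1⟩, ?_⟩
  set C : ℝ := K * L * Real.exp (K * L) + 1 with hCdef
  have hC : 0 < C := by positivity
  intro N hN hτT n hn2 hnN k hk1 hkn1
  set τ : ℝ := T / N with hτdef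
  have hτpos : 0 < τ := div_pos hT (by exact_mod_cast hN)
  have hτ1 : τ ≤ 1 := hτT
  have hn1 : 1 ≤ n := by omega
  set j := n - k with hjdef
  clear_value j
  have hj1 : 1 ≤ j := by omega
  have hjn : j ≤ n := by omega
  have hNne : (N : ℝ) ≠ 0 := by exact_mod_cast hN.ne'
  have hNτ : (N : ℝ) * τ = T := by rw [hτdef]; field_simp
  have hn2r : (2 : ℝ) ≤ (n : ℝ) := by exact_mod_cast hn2
  have hnNr : (n : ℝ) ≤ (N : ℝ) := by exact_mod_cast hnN
  have hnτT : (n : ℝ) * τ ≤ T := by nlinarith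
  set t₁ : ℝ := ((n : ℝ) - 1 / 2) * τ with ht₁def
  set t₂ : ℝ := ((n : ℝ) - 1 - 1 / 2) * τ with ht₂def
  have ht₁ : t₁ ∈ Set.Icc (0 : ℝ) T := ⟨by nlinarith, by nlinarith⟩
  have ht₂ : t₂ ∈ Set.Icc (0 : ℝ) T := ⟨by nlinarith, by nlinarith⟩
  set β₁ : ℝ := α t₁ with hβ₁def
  set β₂ : ℝ := α t₂ with hβ₂def
  have hb1 := hbound t₁ ht₁
  have hb2 := hbound t₂ ht₂
  have h12 : β₁ ≤ β₂ := hAnti ht₂ ht₁ (by nlinarith)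
  have hβ₁1 : β₁ < 1 := lt_of_le_of_lt hb1.2 hαb
  have hβ₂1 : β₂ < 1 := lt_of_le_of_lt hb2.2 hαb
  have hδL : β₂ - β₁ ≤ L * τ := by
    have h := hLip t₁ ht₁ t₂ ht₂
    rw [Real.norm_eq_abs, Real.norm_eq_abs] at h
    have habs : |t₂ - t₁| = τ := by
      rw [abs_of_nonpos (by nlinarith)]; ring
    rw [habs] at h
    calc β₂ - β₁ ≤ |β₂ - β₁| := le_abs_self _
      _ ≤ L * τ := h
  set E : ℝ := Real.exp (K * (β₂ - β₁)) with hEdef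
  have hcmp : acoef τ β₁ n j ≤ E * acoef τ β₂ n j :=
    acoef_compare hτpos hβ₁1 hβ₂1 (Real.exp_pos _).le hj1 hjn hnτT
      (fun x hx0 hxT => hKmain β₁ β₂ x hb1.1 h12 hb2.2 hx0 hxT)
  have hE' : E ≤ 1 + C * τ := by
    have e1 : E ≤ Real.exp ((K * L) * τ) := by
      apply Real.exp_le_exp.2
      nlinarith [mul_le_mul_of_nonneg_left hδL hK0]
    have e2 := exp_small (mul_nonneg hK0 hL0) hτpos.le hτ1
    have e3 : (K * L * Real.exp (K * L)) * τ ≤ C * τ := by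
      apply mul_le_mul_of_nonneg_right _ hτpos.le
      rw [hCdef]; linarith
    linarith
  have ha2 : 0 ≤ acoef τ β₂ n j := acoef_nonneg hτpos hβ₂1 n j hj1
  have hshift : acoef τ β₂ (n - 1) j = acoef τ β₂ n j := by
    have h := acoef_succ τ β₂ (n - 1) j
    have hnn : n - 1 + 1 = n := by omega
    rw [hnn] at h
    exact h.symm
  have hcast : ((n - 1 : ℕ) : ℝ) = (n : ℝ) - 1 := by
    rw [Nat.cast_sub hn1, Nat.cast_one]
  have h6 : acoef τ β₁ n j ≤ (1 + C * τ) * acoef τ β₂ n j :=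
    hcmp.trans (mul_le_mul_of_nonneg_right hE' ha2)
  rcases eq_or_ne j 1 with hj' | hj'
  · subst hj'
    simp only [bvar, reduceIte]
    rw [hcast]
    have harg : ((n : ℝ) - 1 - 1 / 2) * τ = t₂ := by rw [ht₂def]
    rw [harg, ← hβ₂def, ← hβ₁def, hshift]
    nlinarith [mul_le_mul_of_nonneg_left h6 hτpos.le, mul_pos hC hτpos]
  · simp only [bvar, if_neg hj']
    rw [hcast]
    have harg : ((n : ℝ) - 1 - 1 / 2) * τ = t₂ := by rw [ht₂def]
    rw [harg, ← hβ₂def, ← hβ₁def, hshift]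
    nlinarith [mul_le_mul_of_nonneg_left h6 hτpos.le, mul_pos hC hτpos]
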